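/- arXiv:2103.01131 — 3 statements merged into one kernel-verified Lean document; each statement's English description precedes it below -/
import Mathlib

section
/- Fix reals b > c > 0, β > 0 and θ > 0. For each integer N ≥ 3, let E_N(θ) denote either the reward cost E_r(θ) or the punishment cost E_p(θ) computed for population size N with δ = −(c + b/(N−1)) (the Donation Game). Then lim_{N→∞} E_N(θ) / ((N²θ/2)·(log N + γ)) = 1 + e^{−β|θ−c|}, where γ is the Euler–Mascheroni constant. -/
open Real Finset Filter Topology Matrix

/-- Transition matrix `U` between the transient states of the absorbing Markov chain,
for population size `N`, selection intensity `β`, payoff difference `δ` and incentive `θ`.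
The index `i : Fin (N-1)` corresponds to the state with `i+1` cooperators;
`x = β(θ+δ)` and `p_i = i(N-i)/N²`. -/
noncomputable def Umat (N : ℕ) (β δ θ : ℝ) : Matrix (Fin (N - 1)) (Fin (N - 1)) ℝ :=
  fun i j =>
    let x : ℝ := β * (θ + δ)
    let p : ℝ := ((i : ℕ) + 1 : ℝ) * ((N : ℝ) - ((i : ℕ) + 1 : ℝ)) / (N : ℝ) ^ 2
    if (j : ℕ) = (i : ℕ) + 1 then p / (1 + Real.exp (-x))
    else if (j : ℕ) + 1 = (i : ℕ) then p / (1 + Real.exp x)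
    else if j = i then 1 - p / (1 + Real.exp (-x)) - p / (1 + Real.exp x)
    else 0

/-- The fundamental matrix `𝒩 = (I - U)⁻¹` of the absorbing Markov chain. -/
noncomputable def fund (N : ℕ) (β δ θ : ℝ) : Matrix (Fin (N - 1)) (Fin (N - 1)) ℝ :=
  (1 - Umat N β δ θ)⁻¹

/-- Expected total cost of institutional reward,
`E_r(θ) = (θ/2) Σ_{i=1}^{N-1} (n_{1,i} + n_{N-1,i}) · i`
(row `1` is index `0` and row `N-1` is index `N-2`; junk value `0` for `N < 3`). -/
noncomputable def Ereward (N : ℕ) (β δ θ : ℝ) : ℝ :=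
  if h : 3 ≤ N then
    (θ / 2) * ∑ j : Fin (N - 1),
      (fund N β δ θ ⟨0, by omega⟩ j + fund N β δ θ ⟨N - 2, by omega⟩ j) * ((j : ℕ) + 1 : ℝ)
  else 0

/-- Expected total cost of institutional punishment,
`E_p(θ) = (θ/2) Σ_{i=1}^{N-1} (n_{1,i} + n_{N-1,i}) · (N - i)`. -/
noncomputable def Epunish (N : ℕ) (β δ θ : ℝ) : ℝ :=
  if h : 3 ≤ N then
    (θ / 2) * ∑ j : Fin (N - 1),
      (fund N β δ θ ⟨0, by omega⟩ j + fund N β δ θ ⟨N - 2, by omega⟩ j)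
        * ((N : ℝ) - ((j : ℕ) + 1 : ℝ))
  else 0

/-- Harmonic number `H_N = Σ_{j=1}^{N-1} 1/j`. -/
noncomputable def harmonicNum (N : ℕ) : ℝ := ∑ j ∈ Finset.range (N - 1), (1 : ℝ) / ((j : ℕ) + 1)

/-!
Write `r = e^{-x}`, the ratio `u_{i,i-1} / u_{i,i+1}`. Then `I - U` is `diag(p_i)` times the
generator of a birth–death walk with constant ratio `r`, whose Green's function is
`(1 - r^{min k j}) (r^{max k j} - r^N)` up to a factor depending only on `j`; this gives `𝒩` in
closed form. The two boundary rows give `(n_{1,j} + n_{N-1,j}) p_j = L + (1 + r) t_j`, where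
`L = (1 + r)(1 - r^{N-1}) / (1 - r^N)` and the `t_j ≥ 0` sum to `L / (1 + r)`. Both costs are
`(N²θ/2) Σ_j (L + (1 + r) t_j) a_j` with weights `a_j ∈ (0, 1]` summing to `H_{N-1}`, so they lie
between `(N²θ/2) L H_{N-1}` and `(N²θ/2) L (H_{N-1} + 1)`; since `H_{N-1} = log N + γ + o(1)`, only
the limit of `L` matters. In the Donation Game `r_N → e^{β(c-θ)}`, and `L` is invariant under
`r ↦ 1/r`, so `L → 1 + e^{-β|θ-c|}`; at `θ = c` the power `r_N^{N-1} = e^{βb} ≠ 1` is constant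
and `L → 2`.
-/

noncomputable def pairProb (N k : ℕ) : ℝ := k * ((N : ℝ) - k) / (N : ℝ) ^ 2

lemma pairProb_ne_zero {N k : ℕ} (hk : 0 < k) (hkN : k < N) : pairProb N k ≠ 0 := by
  have hk' : (0 : ℝ) < k := by exact_mod_cast hk
  have hkN' : (0 : ℝ) < N - k := sub_pos.2 (by exact_mod_cast hkN)
  have hN : (N : ℝ) ≠ 0 := by exact_mod_cast (by omega : N ≠ 0)
  exact div_ne_zero (mul_ne_zero hk'.ne' hkN'.ne') (pow_ne_zero 2 hN)

noncomputable def green (r : ℝ) (N k j : ℕ) : ℝ := (1 - r ^ min k j) * (r ^ max k j - r ^ N)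

lemma green_recurrence (r : ℝ) (N k j : ℕ) :
    (1 + r) * green r N (k + 1) j - green r N (k + 2) j - r * green r N k j =
      if k + 1 = j then r ^ j * (1 - r) * (1 - r ^ N) else 0 := by
  unfold green
  rcases lt_trichotomy (k + 1) j with h | rfl | h
  · rw [if_neg h.ne, min_eq_left h.le, min_eq_left (by omega), min_eq_left (by omega),
      max_eq_right h.le, max_eq_right (by omega), max_eq_right (by omega)]
    ring
  · rw [if_pos rfl, min_self, max_self, min_eq_right (by omega), max_eq_left (by omega),
      min_eq_left (by omega), max_eq_right (by omega)]
    ring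
  · rw [if_neg h.ne', min_eq_right h.le, min_eq_right (by omega), min_eq_right (by omega),
      max_eq_left h.le, max_eq_left (by omega), max_eq_left (by omega)]
    ring

lemma sum_fin_ite_val_eq {n : ℕ} (f : ℕ → ℝ) (m : ℕ) :
    ∑ k : Fin n, (if (k : ℕ) = m then f k else 0) = if m < n then f m else 0 := by
  rw [Fin.sum_univ_eq_sum_range (fun k => if k = m then f k else 0), sum_ite_eq']
  simp only [mem_range]

lemma sum_Umat_mul (N : ℕ) (β δ θ : ℝ) (v : ℕ → ℝ) (h0 : v 0 = 0) (hN : v N = 0)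
    (i : Fin (N - 1)) :
    ∑ k, Umat N β δ θ i k * v (k + 1) = v (i + 1) -
      pairProb N (i + 1) / (1 + exp (-(β * (θ + δ)))) *
        ((1 + exp (-(β * (θ + δ)))) * v (i + 1) - v (i + 2) - exp (-(β * (θ + δ))) * v i) := by
  set a := pairProb N (i + 1) / (1 + exp (-(β * (θ + δ))))
  set b := pairProb N (i + 1) / (1 + exp (β * (θ + δ)))
  have hsplit : ∀ k, Umat N β δ θ i k * v (k + 1) =
      ((if (k : ℕ) = i + 1 then a * v (k + 1) else 0)
        + if (k : ℕ) + 1 = i then b * v (k + 1) else 0)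
        + if k = i then (1 - a - b) * v (k + 1) else 0 := by
    intro k
    have hp : pairProb N (i + 1) =
        ((i : ℕ) + 1 : ℝ) * ((N : ℝ) - ((i : ℕ) + 1 : ℝ)) / (N : ℝ) ^ 2 := by
      simp [pairProb]
    simp only [Umat, a, b, hp]
    split_ifs <;> simp_all [Fin.ext_iff]; omega
  have hup : ∑ k : Fin (N - 1), (if (k : ℕ) = i + 1 then a * v (k + 1) else 0) =
      a * v (i + 2) := by
    rw [sum_fin_ite_val_eq (fun k => a * v (k + 1))]
    split_ifs with h
    · rfl
    · rw [show (i : ℕ) + 2 = N by have := i.isLt; omega, hN, mul_zero]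
  have hdown : ∑ k : Fin (N - 1), (if (k : ℕ) + 1 = i then b * v (k + 1) else 0) = b * v i := by
    rcases Nat.eq_zero_or_pos (i : ℕ) with hi0 | hpos
    · simp only [hi0, Nat.add_one_ne_zero, if_false, sum_const_zero, h0, mul_zero]
    · obtain ⟨m, hm⟩ : ∃ m, (i : ℕ) = m + 1 := ⟨i - 1, by omega⟩
      simp only [hm, add_left_inj]
      rw [sum_fin_ite_val_eq (fun k => b * v (k + 1)), if_pos (by have := i.isLt; omega)]
  rw [sum_congr rfl fun k _ => hsplit k, sum_add_distrib, sum_add_distrib, hup, hdown,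
    sum_ite_eq' univ i, if_pos (mem_univ i)]
  have hr0 := exp_pos (-(β * (θ + δ)))
  simp only [a, b, show exp (β * (θ + δ)) = (exp (-(β * (θ + δ))))⁻¹ by rw [exp_neg, inv_inv]]
  field_simp
  ring

noncomputable def greenMatrix (N : ℕ) (r : ℝ) : Matrix (Fin (N - 1)) (Fin (N - 1)) ℝ :=
  of fun i j => green r N (i + 1) (j + 1) *
    ((1 + r) / ((1 - r) * (1 - r ^ N) * r ^ ((j : ℕ) + 1) * pairProb N (j + 1)))

lemma one_sub_pow_ne_zero {r : ℝ} (hr0 : 0 < r) (hr1 : r ≠ 1) {n : ℕ} (hn : n ≠ 0) :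
    1 - r ^ n ≠ 0 :=
  sub_ne_zero.2 fun h => hr1 ((pow_eq_one_iff_of_nonneg hr0.le hn).1 h.symm)

lemma fund_eq_greenMatrix {N : ℕ} {β δ θ : ℝ} (hr : exp (-(β * (θ + δ))) ≠ 1) :
    fund N β δ θ = greenMatrix N (exp (-(β * (θ + δ)))) := by
  set r := exp (-(β * (θ + δ))) with hr_def
  have hr0 : 0 < r := exp_pos _
  apply inv_eq_right_inv
  ext i j
  have hjN := j.isLt
  set C := (1 + r) / ((1 - r) * (1 - r ^ N) * r ^ ((j : ℕ) + 1) * pairProb N (j + 1))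
  have hsum := sum_Umat_mul N β δ θ (fun k => green r N k (j + 1) * C)
    (by simp [green]) (by simp [green, max_eq_left (by omega : (j : ℕ) + 1 ≤ N)]) i
  have hrec : (1 + r) * (green r N (i + 1) (j + 1) * C) - green r N (i + 2) (j + 1) * C -
      r * (green r N i (j + 1) * C) =
        C * if (i : ℕ) + 1 = j + 1 then r ^ ((j : ℕ) + 1) * (1 - r) * (1 - r ^ N) else 0 := by
    rw [← green_recurrence]
    ring
  rw [Matrix.sub_mul, Matrix.one_mul, Matrix.sub_apply, mul_apply]
  simp only [greenMatrix, of_apply] at hsum ⊢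
  rw [hsum, hrec, one_apply]
  by_cases hij : i = j
  · subst hij
    have hN : 1 - r ^ N ≠ 0 := one_sub_pow_ne_zero hr0 hr (by omega)
    have hp : pairProb N (i + 1) ≠ 0 := pairProb_ne_zero (by omega) (by omega)
    have h1r : 1 - r ≠ 0 := sub_ne_zero.2 hr.symm
    simp only [if_true, C]
    field_simp
    ring
  · rw [if_neg (by simpa [Fin.ext_iff] using hij), if_neg hij]
    ring

noncomputable def harmonicCoeff (r : ℝ) (N : ℕ) : ℝ := (1 + r) * (1 - r ^ (N - 1)) / (1 - r ^ N)

noncomputable def tailWeight (r : ℝ) (N j : ℕ) : ℝ := r ^ (N - 1 - j) * (1 - r) / (1 - r ^ N)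

noncomputable def visitWeight (r : ℝ) (N j : ℕ) : ℝ :=
  harmonicCoeff r N + (1 + r) * tailWeight r N j

lemma greenMatrix_rows_mul_pairProb {N : ℕ} {r : ℝ} (hr0 : 0 < r) (hr1 : r ≠ 1) (hN : 2 ≤ N)
    (j : Fin (N - 1)) :
    (greenMatrix N r ⟨0, by omega⟩ j + greenMatrix N r ⟨N - 2, by omega⟩ j) * pairProb N (j + 1) =
      visitWeight r N (j + 1) := by
  have hjN := j.isLt
  obtain ⟨m, hm⟩ : ∃ m, N - 1 - ((j : ℕ) + 1) = m := ⟨_, rfl⟩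
  have e1 : r ^ (N - 1) = r ^ ((j : ℕ) + 1) * r ^ m := by rw [← pow_add]; congr 1; omega
  have e2 : r ^ N = r ^ ((j : ℕ) + 1) * r ^ m * r := by rw [← pow_add, ← pow_succ]; congr 1; omega
  have hp : pairProb N (j + 1) ≠ 0 := pairProb_ne_zero (by omega) (by omega)
  have h1r : 1 - r ≠ 0 := sub_ne_zero.2 hr1.symm
  have hrN := one_sub_pow_ne_zero hr0 hr1 (n := N) (by omega)
  simp only [greenMatrix, of_apply, green, visitWeight, harmonicCoeff, tailWeight, hm,
    show N - 2 + 1 = N - 1 by omega, min_eq_left (by omega : 1 ≤ (j : ℕ) + 1),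
    max_eq_right (by omega : 1 ≤ (j : ℕ) + 1), min_eq_right (by omega : (j : ℕ) + 1 ≤ N - 1),
    max_eq_left (by omega : (j : ℕ) + 1 ≤ N - 1), zero_add, pow_one]
  rw [e1, e2] at *
  field_simp
  ring

lemma tailWeight_nonneg {r : ℝ} (hr : 0 ≤ r) (N j : ℕ) : 0 ≤ tailWeight r N j := by
  rw [tailWeight, mul_div_assoc]
  refine mul_nonneg (pow_nonneg hr _) ?_
  rcases le_total r 1 with h | h
  · exact div_nonneg (sub_nonneg.2 h) (sub_nonneg.2 (pow_le_one₀ hr h))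
  · exact div_nonneg_of_nonpos (sub_nonpos.2 h) (sub_nonpos.2 (one_le_pow₀ h))

lemma one_add_mul_sum_tailWeight (r : ℝ) (N : ℕ) :
    (1 + r) * ∑ j ∈ range (N - 1), tailWeight r N (j + 1) = harmonicCoeff r N := by
  have hreflect : ∑ j ∈ range (N - 1), r ^ (N - 1 - (j + 1)) = ∑ j ∈ range (N - 1), r ^ j := by
    rw [← sum_range_reflect (fun j => r ^ j)]
    exact sum_congr rfl fun j _ => by congr 1; omega
  simp only [tailWeight, ← sum_div, ← sum_mul, hreflect, harmonicCoeff, ← mul_neg_geom_sum r]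
  ring

lemma visitWeight_sum_bounds {r : ℝ} (hr : 0 ≤ r) {N : ℕ} {a : ℕ → ℝ}
    (ha0 : ∀ j < N - 1, 0 ≤ a j) (ha1 : ∀ j < N - 1, a j ≤ 1) :
    harmonicCoeff r N * ∑ j ∈ range (N - 1), a j ≤
        ∑ j ∈ range (N - 1), visitWeight r N (j + 1) * a j ∧
      ∑ j ∈ range (N - 1), visitWeight r N (j + 1) * a j ≤
        harmonicCoeff r N * (∑ j ∈ range (N - 1), a j + 1) := by
  have hsplit : ∑ j ∈ range (N - 1), visitWeight r N (j + 1) * a j =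
      harmonicCoeff r N * ∑ j ∈ range (N - 1), a j +
        (1 + r) * ∑ j ∈ range (N - 1), tailWeight r N (j + 1) * a j := by
    simp only [visitWeight, add_mul, sum_add_distrib, mul_sum, mul_assoc]
  have hlow : 0 ≤ ∑ j ∈ range (N - 1), tailWeight r N (j + 1) * a j :=
    sum_nonneg fun j hj => mul_nonneg (tailWeight_nonneg hr _ _) (ha0 j (mem_range.1 hj))
  have hup : ∑ j ∈ range (N - 1), tailWeight r N (j + 1) * a j ≤
      ∑ j ∈ range (N - 1), tailWeight r N (j + 1) :=
    sum_le_sum fun j hj =>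
      mul_le_of_le_one_right (tailWeight_nonneg hr _ _) (ha1 j (mem_range.1 hj))
  have h1r : 0 ≤ 1 + r := by linarith
  rw [hsplit, mul_add, mul_one, ← one_add_mul_sum_tailWeight r N]
  exact ⟨by linarith [mul_nonneg h1r hlow], by linarith [mul_le_mul_of_nonneg_left hup h1r]⟩

lemma fund_cost_div_eq {N : ℕ} {β δ θ : ℝ} (hN : 2 ≤ N) (hθ : θ ≠ 0)
    (hr : exp (-(β * (θ + δ))) ≠ 1) {y a : ℕ → ℝ}
    (hy : ∀ j < N - 1, y j = (N : ℝ) ^ 2 * pairProb N (j + 1) * a j) :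
    (θ / 2 * ∑ j : Fin (N - 1),
        (fund N β δ θ ⟨0, by omega⟩ j + fund N β δ θ ⟨N - 2, by omega⟩ j) * y j) /
          ((N : ℝ) ^ 2 * θ / 2) =
      ∑ j ∈ range (N - 1), visitWeight (exp (-(β * (θ + δ)))) N (j + 1) * a j := by
  have hsum : ∑ j : Fin (N - 1),
      (fund N β δ θ ⟨0, by omega⟩ j + fund N β δ θ ⟨N - 2, by omega⟩ j) * y j =
        (N : ℝ) ^ 2 * ∑ j ∈ range (N - 1), visitWeight (exp (-(β * (θ + δ)))) N (j + 1) * a j := by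
    rw [mul_sum, ← Fin.sum_univ_eq_sum_range, fund_eq_greenMatrix hr]
    refine sum_congr rfl fun j _ => ?_
    rw [hy j j.isLt, ← greenMatrix_rows_mul_pairProb (exp_pos _) hr hN]
    ring
  have hN0 : (N : ℝ) ≠ 0 := by exact_mod_cast (by omega : N ≠ 0)
  rw [hsum]
  field_simp

lemma sum_one_div_sub_eq_harmonicNum (N : ℕ) :
    ∑ j ∈ range (N - 1), 1 / ((N : ℝ) - ((j : ℝ) + 1)) = harmonicNum N := by
  rw [harmonicNum, ← sum_range_reflect]
  refine sum_congr rfl fun j hj => ?_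
  have hcast : ((N - 1 - 1 - j : ℕ) : ℝ) + (j + 2) = N := by
    exact_mod_cast (by have := mem_range.1 hj; omega : N - 1 - 1 - j + (j + 2) = N)
  congr 1
  linarith

lemma Ereward_div_bounds {N : ℕ} {β δ θ : ℝ} (hN : 3 ≤ N) (hθ : θ ≠ 0)
    (hr : exp (-(β * (θ + δ))) ≠ 1) :
    harmonicCoeff (exp (-(β * (θ + δ)))) N * harmonicNum N ≤
        Ereward N β δ θ / ((N : ℝ) ^ 2 * θ / 2) ∧
      Ereward N β δ θ / ((N : ℝ) ^ 2 * θ / 2) ≤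
        harmonicCoeff (exp (-(β * (θ + δ)))) N * (harmonicNum N + 1) := by
  rw [Ereward, dif_pos hN, fund_cost_div_eq (by omega) hθ hr (y := fun j => (j : ℝ) + 1)
    (a := fun j => 1 / ((N : ℝ) - ((j : ℝ) + 1))) fun j hj => by
      have : (N : ℝ) - ((j : ℝ) + 1) ≠ 0 :=
        (sub_pos.2 (by exact_mod_cast (by omega : j + 1 < N))).ne'
      unfold pairProb
      push_cast
      field_simp, ← sum_one_div_sub_eq_harmonicNum]
  refine visitWeight_sum_bounds (exp_pos _).le (fun j hj => ?_) (fun j hj => ?_)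
  all_goals have : (j : ℝ) + 2 ≤ N := by exact_mod_cast (by omega : j + 2 ≤ N)
  · exact one_div_nonneg.2 (by linarith)
  · exact div_le_one_of_le₀ (by linarith) (by linarith)

lemma Epunish_div_bounds {N : ℕ} {β δ θ : ℝ} (hN : 3 ≤ N) (hθ : θ ≠ 0)
    (hr : exp (-(β * (θ + δ))) ≠ 1) :
    harmonicCoeff (exp (-(β * (θ + δ)))) N * harmonicNum N ≤
        Epunish N β δ θ / ((N : ℝ) ^ 2 * θ / 2) ∧
      Epunish N β δ θ / ((N : ℝ) ^ 2 * θ / 2) ≤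
        harmonicCoeff (exp (-(β * (θ + δ)))) N * (harmonicNum N + 1) := by
  rw [Epunish, dif_pos hN, fund_cost_div_eq (by omega) hθ hr
    (y := fun j => (N : ℝ) - ((j : ℝ) + 1)) (a := fun j => 1 / ((j : ℝ) + 1)) fun j hj => by
      unfold pairProb
      push_cast
      field_simp]
  refine visitWeight_sum_bounds (exp_pos _).le (fun j _ => by positivity) (fun j _ => ?_)
  exact div_le_one_of_le₀ (by linarith [j.cast_nonneg (α := ℝ)]) (by positivity)

lemma harmonicCoeff_inv {r : ℝ} (hr : r ≠ 0) (N : ℕ) : harmonicCoeff r⁻¹ N = harmonicCoeff r N := by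
  rcases N with _ | n
  · simp [harmonicCoeff]
  have hc : -(r ^ (n + 1))⁻¹ ≠ 0 := neg_ne_zero.2 (inv_ne_zero (pow_ne_zero _ hr))
  rw [harmonicCoeff, harmonicCoeff, Nat.add_sub_cancel, inv_pow, inv_pow,
    show (1 + r⁻¹) * (1 - (r ^ n)⁻¹) = (1 + r) * (1 - r ^ n) * -(r ^ (n + 1))⁻¹ by
      field_simp; ring,
    show 1 - (r ^ (n + 1))⁻¹ = (1 - r ^ (n + 1)) * -(r ^ (n + 1))⁻¹ by field_simp; ring,
    mul_div_mul_right _ _ hc]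

lemma tendsto_harmonicCoeff {r : ℕ → ℝ} {q s : ℝ} (hr : Tendsto r atTop (𝓝 q))
    (hs : Tendsto (fun N => r N ^ (N - 1)) atTop (𝓝 s)) (hsq : s * q ≠ 1) :
    Tendsto (fun N => harmonicCoeff (r N) N) atTop (𝓝 ((1 + q) * (1 - s) / (1 - s * q))) := by
  have h1 : Tendsto (fun _ : ℕ => (1 : ℝ)) atTop (𝓝 1) := tendsto_const_nhds
  have hlim := ((h1.add hr).mul (h1.sub hs)).div (h1.sub (hs.mul hr)) (sub_ne_zero.2 hsq.symm)
  refine hlim.congr' ?_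
  filter_upwards [eventually_ge_atTop 1] with N hN
  simp only [Pi.div_apply, harmonicCoeff]
  rw [← pow_succ, Nat.sub_add_cancel hN]

lemma tendsto_pow_sub_one_of_abs_lt_one {r : ℕ → ℝ} {q : ℝ} (hr : Tendsto r atTop (𝓝 q))
    (hq : |q| < 1) : Tendsto (fun N => r N ^ (N - 1)) atTop (𝓝 0) := by
  obtain ⟨ρ, hqρ, hρ1⟩ := exists_between hq
  refine squeeze_zero_norm' ?_ ((tendsto_pow_atTop_nhds_zero_of_lt_one
    ((abs_nonneg q).trans hqρ.le) hρ1).comp (tendsto_sub_atTop_nat 1))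
  filter_upwards [hr.abs.eventually_lt_const hqρ] with N hN
  rw [norm_pow, norm_eq_abs]
  exact pow_le_pow_left₀ (abs_nonneg _) hN.le _

lemma tendsto_harmonicCoeff_of_abs_lt_one {r : ℕ → ℝ} {q : ℝ} (hr : Tendsto r atTop (𝓝 q))
    (hq : |q| < 1) : Tendsto (fun N => harmonicCoeff (r N) N) atTop (𝓝 (1 + q)) := by
  simpa using tendsto_harmonicCoeff hr (tendsto_pow_sub_one_of_abs_lt_one hr hq) (by simp)

lemma tendsto_exp_donationGame (b c β θ : ℝ) :
    Tendsto (fun N : ℕ => exp (-(β * (θ + -(c + b / ((N : ℝ) - 1)))))) atTop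
      (𝓝 (exp (β * (c - θ)))) := by
  have hb0 : Tendsto (fun N : ℕ => b / ((N : ℝ) - 1)) atTop (𝓝 0) :=
    tendsto_const_nhds.div_atTop (tendsto_atTop_add_const_right _ _ tendsto_natCast_atTop_atTop)
  convert (((hb0.const_add c).neg.const_add θ).const_mul β).neg.rexp using 2
  congr 1
  ring

lemma exp_donationGame_pow_of_eq (b c β : ℝ) {N : ℕ} (hN : 2 ≤ N) :
    exp (-(β * (c + -(c + b / ((N : ℝ) - 1))))) ^ (N - 1) = exp (β * b) := by
  have hN1 : ((N - 1 : ℕ) : ℝ) = N - 1 := by rw [Nat.cast_sub (by omega), Nat.cast_one]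
  have hN1' : (N : ℝ) - 1 ≠ 0 := by rw [← hN1]; exact_mod_cast (by omega : N - 1 ≠ 0)
  rw [← exp_nat_mul, hN1]
  congr 1
  field_simp
  ring

lemma tendsto_harmonicCoeff_donationGame {b c β θ : ℝ} (hb : b ≠ 0) (hβ : 0 < β) :
    (∀ᶠ N : ℕ in atTop, exp (-(β * (θ + -(c + b / ((N : ℝ) - 1))))) ≠ 1) ∧
      Tendsto (fun N : ℕ => harmonicCoeff (exp (-(β * (θ + -(c + b / ((N : ℝ) - 1)))))) N)
        atTop (𝓝 (1 + exp (-β * |θ - c|))) := by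
  have hlim := tendsto_exp_donationGame b c β θ
  rcases lt_trichotomy θ c with h | rfl | h
  · have hq : 1 < exp (β * (c - θ)) := one_lt_exp_iff.2 (mul_pos hβ (sub_pos.2 h))
    have hinv := hlim.inv₀ (exp_pos _).ne'
    rw [← exp_neg, ← neg_mul] at hinv
    refine ⟨(hlim.eventually_const_lt hq).mono fun N h => h.ne', ?_⟩
    have := tendsto_harmonicCoeff_of_abs_lt_one hinv (by
      rw [abs_of_pos (exp_pos _)]
      exact exp_lt_one_iff.2 (mul_neg_of_neg_of_pos (neg_neg_of_pos hβ) (sub_pos.2 h)))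
    simp only [ne_eq, exp_ne_zero, not_false_eq_true, harmonicCoeff_inv] at this
    rwa [abs_sub_comm, abs_of_pos (sub_pos.2 h)]
  · have hs : exp (β * b) ≠ 1 := fun h => mul_ne_zero hβ.ne' hb (Real.exp_eq_one_iff _ |>.1 h)
    have hpow : ∀ᶠ N : ℕ in atTop,
        exp (-(β * (θ + -(θ + b / ((N : ℝ) - 1))))) ^ (N - 1) = exp (β * b) :=
      (eventually_ge_atTop 2).mono fun N hN => exp_donationGame_pow_of_eq b θ β hN
    refine ⟨hpow.mono fun N hN h1 => hs (by rw [← hN, h1, one_pow]), ?_⟩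
    convert tendsto_harmonicCoeff hlim (tendsto_const_nhds.congr' (hpow.mono fun _ h => h.symm))
      (by simpa using hs) using 2
    have : 1 - exp (β * b) ≠ 0 := sub_ne_zero.2 hs.symm
    simp only [sub_self, mul_zero, abs_zero, exp_zero, mul_one]
    field_simp
  · have hq : exp (β * (c - θ)) < 1 := exp_lt_one_iff.2 (mul_neg_of_pos_of_neg hβ (sub_neg.2 h))
    refine ⟨(hlim.eventually_lt_const hq).mono fun N h => h.ne, ?_⟩
    have := tendsto_harmonicCoeff_of_abs_lt_one hlim (by rwa [abs_of_pos (exp_pos _)])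
    rwa [abs_of_pos (sub_pos.2 h), neg_mul, ← mul_neg, neg_sub]

lemma tendsto_harmonicNum_sub_log :
    Tendsto (fun N => harmonicNum N - log N) atTop (𝓝 eulerMascheroniConstant) := by
  refine (tendsto_harmonic_sub_log_add_one.comp (tendsto_sub_atTop_nat 1)).congr' ?_
  filter_upwards [eventually_ge_atTop 1] with N hN
  simp [harmonicNum, harmonic, Nat.cast_sub hN]

lemma tendsto_log_add_eulerMascheroni_atTop :
    Tendsto (fun N : ℕ => log N + eulerMascheroniConstant) atTop atTop :=
  tendsto_atTop_add_const_right _ _ (tendsto_log_atTop.comp tendsto_natCast_atTop_atTop)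

lemma tendsto_div_log_add_eulerMascheroni {u : ℕ → ℝ} {a : ℝ}
    (hu : Tendsto (fun N => u N - log N) atTop (𝓝 a)) :
    Tendsto (fun N => u N / (log N + eulerMascheroniConstant)) atTop (𝓝 1) := by
  have hD := tendsto_log_add_eulerMascheroni_atTop
  have h := ((hu.sub_const eulerMascheroniConstant).div_atTop hD).const_add 1
  rw [add_zero] at h
  refine h.congr' ?_
  filter_upwards [hD.eventually_gt_atTop 0] with N hN
  field_simp
  ring

lemma tendsto_div_log_of_harmonicNum_bounds {f ℓ : ℕ → ℝ} {L : ℝ} (hℓ : Tendsto ℓ atTop (𝓝 L))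
    (hf : ∀ᶠ N in atTop, ℓ N * harmonicNum N ≤ f N ∧ f N ≤ ℓ N * (harmonicNum N + 1)) :
    Tendsto (fun N => f N / (log N + eulerMascheroniConstant)) atTop (𝓝 L) := by
  have hlow := tendsto_div_log_add_eulerMascheroni tendsto_harmonicNum_sub_log
  have hup := tendsto_div_log_add_eulerMascheroni (u := fun N => harmonicNum N + 1)
    ((tendsto_harmonicNum_sub_log.const_add 1).congr fun N => by ring)
  have hpos := tendsto_log_add_eulerMascheroni_atTop.eventually_gt_atTop 0
  refine tendsto_of_tendsto_of_tendsto_of_le_of_le' (by simpa using hℓ.mul hlow)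
    (by simpa using hℓ.mul hup) ?_ ?_
  all_goals filter_upwards [hf, hpos] with N hN hD
  · rw [← mul_div_assoc]
    exact div_le_div_of_nonneg_right hN.1 hD.le
  · rw [← mul_div_assoc]
    exact div_le_div_of_nonneg_right hN.2 hD.le

/-- In the Donation Game (δ = −(c + b/(N−1))), for fixed b > c > 0, β > 0, θ > 0,
lim_{N→∞} E_N(θ) / ((N²θ/2)(log N + γ)) = 1 + e^{−β|θ−c|}, for E_N either the reward or the
punishment cost, where γ is the Euler–Mascheroni constant. -/
theorem infinite_population_limit_DG (b c β θ : ℝ) (hc : 0 < c) (hbc : c < b)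
    (hβ : 0 < β) (hθ : 0 < θ) :
    Tendsto (fun N : ℕ =>
        Ereward N β (-(c + b / ((N : ℝ) - 1))) θ /
          (((N : ℝ) ^ 2 * θ / 2) * (Real.log N + Real.eulerMascheroniConstant)))
      atTop (𝓝 (1 + Real.exp (-β * |θ - c|))) ∧
    Tendsto (fun N : ℕ =>
        Epunish N β (-(c + b / ((N : ℝ) - 1))) θ /
          (((N : ℝ) ^ 2 * θ / 2) * (Real.log N + Real.eulerMascheroniConstant)))
      atTop (𝓝 (1 + Real.exp (-β * |θ - c|))) := by
  obtain ⟨hr, hlim⟩ := tendsto_harmonicCoeff_donationGame (c := c) (θ := θ) (hc.trans hbc).ne' hβ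
  simp only [← div_div]
  constructor <;> refine tendsto_div_log_of_harmonicNum_bounds hlim ?_ <;>
    filter_upwards [eventually_ge_atTop 3, hr] with N hN hrN
  · exact Ereward_div_bounds hN hθ.ne' hrN
  · exact Epunish_div_bounds hN hθ.ne' hrN
end

section
/- For every integer N ≥ 2, all reals β > 0, δ, θ, and every ω ∈ (0,1), the long-run frequency of cooperation satisfies ρ_{D,C}/(ρ_{D,C} + ρ_{C,D}) ≥ ω if and only if θ ≥ θ_0(ω) := (1/((N−1)β))·log(ω/(1−ω)) − δ. -/
open Real Finset Filter Topology

/-- Fixation probability of a single cooperator in a population of defectors under the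
pairwise comparison (Fermi) rule with constant payoff advantage `δ + θ` of cooperators:
`ρ_{D,C} = (1 + Σ_{i=1}^{N−1} Π_{k=1}^{i} (1 + e^{−x})/(1 + e^{x}))⁻¹` with `x = β(θ+δ)`. -/
noncomputable def rhoDC (N : ℕ) (β δ θ : ℝ) : ℝ :=
  (1 + ∑ i ∈ Finset.range (N - 1), ∏ _k ∈ Finset.range (i + 1),
    (1 + Real.exp (-(β * (θ + δ)))) / (1 + Real.exp (β * (θ + δ))))⁻¹

/-- Fixation probability of a single defector in a population of cooperators:
`ρ_{C,D} = (1 + Σ_{i=1}^{N−1} Π_{k=1}^{i} (1 + e^{x})/(1 + e^{−x}))⁻¹` with `x = β(θ+δ)`. -/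
noncomputable def rhoCD (N : ℕ) (β δ θ : ℝ) : ℝ :=
  (1 + ∑ i ∈ Finset.range (N - 1), ∏ _k ∈ Finset.range (i + 1),
    (1 + Real.exp (β * (θ + δ))) / (1 + Real.exp (-(β * (θ + δ)))))⁻¹

/-!
With `x = β(θ + δ)` every factor `(1 + e^{∓x})/(1 + e^{±x})` collapses to `e^{∓x}`, so
`ρ_{D,C}⁻¹ = Σ_{i<N} e^{-ix}` and `ρ_{C,D}⁻¹ = Σ_{i<N} e^{ix}`. Reflecting the summation index shows
that the first sum is `e^{-(N-1)x}` times the second, hence the frequency of cooperation is the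
logistic sigmoid of `(N - 1)x`. Since the sigmoid is strictly increasing with inverse
`ω ↦ log (ω / (1 - ω))`, the frequency is at least `ω` exactly when `(N - 1)x ≥ log (ω / (1 - ω))`.
-/

lemma one_add_exp_neg_div_one_add_exp (x : ℝ) : (1 + exp (-x)) / (1 + exp x) = exp (-x) := by
  rw [div_eq_iff (by positivity), mul_add, mul_one, ← exp_add, neg_add_cancel, exp_zero, add_comm]

lemma one_add_exp_div_one_add_exp_neg (x : ℝ) : (1 + exp x) / (1 + exp (-x)) = exp x := by
  simpa only [neg_neg] using one_add_exp_neg_div_one_add_exp (-x)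

lemma one_add_sum_prod_const_eq_geom_sum {R : Type*} [CommSemiring R] (r : R) {n : ℕ}
    (hn : n ≠ 0) : 1 + ∑ i ∈ range (n - 1), ∏ _k ∈ range (i + 1), r = ∑ i ∈ range n, r ^ i := by
  obtain ⟨m, rfl⟩ := Nat.exists_eq_succ_of_ne_zero hn
  simp only [prod_const, card_range, Nat.succ_sub_one, sum_range_succ' _ m, pow_zero, add_comm]

lemma geom_sum_eq_pow_mul_geom_sum_inv {K : Type*} [Field K] {a : K} (ha : a ≠ 0) (n : ℕ) :
    ∑ i ∈ range n, a ^ i = a ^ (n - 1) * ∑ i ∈ range n, a⁻¹ ^ i := by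
  rw [← sum_range_reflect, mul_sum]
  refine sum_congr rfl fun i hi => ?_
  rw [pow_sub₀ a ha (by grind), inv_pow]

lemma sigmoid_log_div_one_sub {ω : ℝ} (hω : ω ∈ Set.Ioo 0 1) :
    sigmoid (log (ω / (1 - ω))) = ω := by
  obtain ⟨hω0, hω1⟩ := hω
  have h1ω : 1 - ω ≠ 0 := by linarith
  rw [sigmoid_def, exp_neg, exp_log (div_pos hω0 (by linarith)), inv_div]
  field_simp
  ring

lemma rhoDC_eq_inv_geom_sum {N : ℕ} (hN : N ≠ 0) (β δ θ : ℝ) :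
    rhoDC N β δ θ = (∑ i ∈ range N, exp (-(β * (θ + δ))) ^ i)⁻¹ := by
  rw [rhoDC, one_add_exp_neg_div_one_add_exp, one_add_sum_prod_const_eq_geom_sum _ hN]

lemma rhoCD_eq_inv_geom_sum {N : ℕ} (hN : N ≠ 0) (β δ θ : ℝ) :
    rhoCD N β δ θ = (∑ i ∈ range N, exp (β * (θ + δ)) ^ i)⁻¹ := by
  rw [rhoCD, one_add_exp_div_one_add_exp_neg, one_add_sum_prod_const_eq_geom_sum _ hN]

lemma rhoDC_div_rhoDC_add_rhoCD {N : ℕ} (hN : N ≠ 0) (β δ θ : ℝ) :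
    rhoDC N β δ θ / (rhoDC N β δ θ + rhoCD N β δ θ) = sigmoid ((N - 1 : ℝ) * (β * (θ + δ))) := by
  set x := β * (θ + δ)
  have hreflect := geom_sum_eq_pow_mul_geom_sum_inv (exp_pos (-x)).ne' N
  rw [← exp_neg, neg_neg] at hreflect
  have hpos : 0 < ∑ i ∈ range N, exp x ^ i :=
    sum_pos (fun i _ => by positivity) ⟨0, mem_range.2 (Nat.pos_of_ne_zero hN)⟩
  have hpow : exp (-x) ^ (N - 1) = exp (-((N - 1 : ℝ) * x)) := by
    rw [← exp_nat_mul, Nat.cast_pred (Nat.pos_of_ne_zero hN)]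
    ring_nf
  rw [rhoDC_eq_inv_geom_sum hN, rhoCD_eq_inv_geom_sum hN, hreflect, hpow, sigmoid_def]
  field_simp
  ring

/-- For every integer N ≥ 2, all reals β > 0, δ, θ, and every ω ∈ (0,1), the
long-run frequency of cooperation satisfies ρ_{D,C}/(ρ_{D,C} + ρ_{C,D}) ≥ ω if and only if
θ ≥ θ_0(ω) = (1/((N−1)β))·log(ω/(1−ω)) − δ. -/
theorem cooperation_frequency_threshold (N : ℕ) (hN : 2 ≤ N) (β δ θ ω : ℝ) (hβ : 0 < β)
    (hω : ω ∈ Set.Ioo (0 : ℝ) 1) :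
    ω ≤ rhoDC N β δ θ / (rhoDC N β δ θ + rhoCD N β δ θ) ↔
      1 / (((N : ℝ) - 1) * β) * Real.log (ω / (1 - ω)) - δ ≤ θ := by
  have hN1 : (0 : ℝ) < N - 1 := by
    have : (2 : ℝ) ≤ N := by exact_mod_cast hN
    linarith
  rw [rhoDC_div_rhoDC_add_rhoCD (by omega)]
  conv_lhs => rw [← sigmoid_log_div_one_sub hω]
  rw [sigmoid_le_iff, sub_le_iff_le_add, one_div, inv_mul_le_iff₀ (by positivity), mul_assoc]
end

section
/- For N = 3, the expected total cost of institutional punishment has the closed form E_p(θ) = (9θ/4)·(4 + (5e^x + 1)/(1 + e^x + e^{2x})), where x = β(θ + δ). -/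
/-!
Both transient states have `p = 2/9`, so `I - U` is `2/9` times `!![1, -σ; -(1 - σ), 1]`, where
`σ = 1 / (1 + e^{-x})` is the logistic sigmoid. Inverting this `2 × 2` matrix gives
`E_p = (9θ/4) (5 - σ) / (1 - σ(1 - σ))`, and substituting `σ = e^x / (1 + e^x)` yields the
closed form.
-/

open Real Finset Filter Topology Matrix

lemma Matrix.inv_fin_two_of {K : Type*} [Field K] (a b c d : K) :
    !![a, b; c, d]⁻¹ = (a * d - b * c)⁻¹ • !![d, -b; -c, a] := by
  rw [Matrix.inv_def, Matrix.det_fin_two_of, Matrix.adjugate_fin_two_of, Ring.inverse_eq_inv']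

lemma Real.sigmoid_eq_exp_div (x : ℝ) : sigmoid x = rexp x / (1 + rexp x) := by
  rw [sigmoid_def, Real.exp_neg]
  field_simp
  ring

lemma Real.one_sub_sigmoid_mul_one_sub_sigmoid_ne_zero (x : ℝ) :
    1 - sigmoid x * (1 - sigmoid x) ≠ 0 := by
  nlinarith [sigmoid_pos x, sigmoid_lt_one x]

lemma one_sub_Umat_three (β δ θ : ℝ) :
    1 - Umat 3 β δ θ = !![2 / 9, -(2 / 9 * sigmoid (β * (θ + δ)));
      -(2 / 9 * (1 - sigmoid (β * (θ + δ)))), 2 / 9] := by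
  have h₁ (p x : ℝ) : p / (1 + rexp (-x)) = p * sigmoid x := by rw [sigmoid_def, div_eq_mul_inv]
  have h₂ (p x : ℝ) : p / (1 + rexp x) = p * (1 - sigmoid x) := by
    rw [← sigmoid_neg, ← h₁, neg_neg]
  ext i j
  fin_cases i <;> fin_cases j <;> simp only [Matrix.sub_apply, Umat, h₁, h₂] <;> norm_num <;> ring

lemma fund_three (β δ θ : ℝ) :
    fund 3 β δ θ = (9 / 2 / (1 - sigmoid (β * (θ + δ)) * (1 - sigmoid (β * (θ + δ))))) •
      !![1, sigmoid (β * (θ + δ)); 1 - sigmoid (β * (θ + δ)), 1] := by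
  rw [fund, one_sub_Umat_three, Matrix.inv_fin_two_of]
  have hs := one_sub_sigmoid_mul_one_sub_sigmoid_ne_zero (β * (θ + δ))
  generalize sigmoid (β * (θ + δ)) = s at hs ⊢
  ext i j
  fin_cases i <;> fin_cases j <;> simp <;> field_simp

lemma Epunish_three (β δ θ : ℝ) :
    Epunish 3 β δ θ = θ / 2 * (2 * (fund 3 β δ θ 0 0 + fund 3 β δ θ 1 0)
      + (fund 3 β δ θ 0 1 + fund 3 β δ θ 1 1)) := by
  rw [Epunish, dif_pos le_rfl, Fin.sum_univ_two]
  norm_num [mul_comm]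

lemma Epunish_three_eq_sigmoid (β δ θ : ℝ) :
    Epunish 3 β δ θ = 9 * θ / 4 * (5 - sigmoid (β * (θ + δ)))
      / (1 - sigmoid (β * (θ + δ)) * (1 - sigmoid (β * (θ + δ)))) := by
  rw [Epunish_three, fund_three]
  have hs := one_sub_sigmoid_mul_one_sub_sigmoid_ne_zero (β * (θ + δ))
  generalize sigmoid (β * (θ + δ)) = s at hs ⊢
  simp only [Matrix.smul_apply, of_apply, cons_val', cons_val_zero, cons_val_one, cons_val_fin_one,
    smul_eq_mul, mul_one]
  field_simp
  ring

theorem punishment_cost_N3_closed_form_general (β δ θ : ℝ) :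
    Epunish 3 β δ θ =
      (9 * θ / 4) * (4 + (5 * Real.exp (β * (θ + δ)) + 1) /
        (1 + Real.exp (β * (θ + δ)) + Real.exp (2 * (β * (θ + δ))))) := by
  rw [Epunish_three_eq_sigmoid, sigmoid_eq_exp_div, two_mul (β * (θ + δ)), Real.exp_add]
  have he := Real.exp_pos (β * (θ + δ))
  generalize rexp (β * (θ + δ)) = e at he ⊢
  have hden : 1 - e / (1 + e) * (1 - e / (1 + e)) = (1 + e + e * e) / (1 + e) ^ 2 := by
    field_simp
    ring
  rw [hden]
  field_simp
  ring

/-- For N = 3, the expected total cost of institutional punishment has the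
closed form E_p(θ) = (9θ/4)·(4 + (5e^x + 1)/(1 + e^x + e^{2x})), where x = β(θ + δ). -/
theorem punishment_cost_N3_closed_form (β δ θ : ℝ) (hβ : 0 < β) :
    Epunish 3 β δ θ =
      (9 * θ / 4) * (4 + (5 * Real.exp (β * (θ + δ)) + 1) /
        (1 + Real.exp (β * (θ + δ)) + Real.exp (2 * (β * (θ + δ))))) :=
  punishment_cost_N3_closed_form_general β δ θ
end
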